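/- Let n, N be positive natural numbers, A a real n × n matrix, B a real n × N matrix, T > 0, and suppose the reachability Gramian W = ∫₀ᵀ exp(tA)·B·Bᵀ·exp(tAᵀ) dt is invertible. Fix x* ∈ ℝ^n and define the control u*(s) = Bᵀ·exp((T−s)Aᵀ)·W⁻¹·x* for s ∈ [0, T]. Then u* steers the system from the origin to x*, i.e. ∫₀ᵀ exp((T−s)A)·B·u*(s) ds = x*, and its energy equals the minimum: ∫₀ᵀ ‖u*(s)‖² ds = ⟨x*, W⁻¹·x*⟩. -/

import Mathlib

open Matrix

attribute [local instance] Matrix.normedAddCommGroup Matrix.normedSpace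

/-!
Write `K s = e^{(T-s)A} B`. Substituting `t = T - s`, the Gramian is `W = ∫₀ᵀ K Kᵀ`, and the
control is `u* = Kᵀ v` with `v = W⁻¹ x*`. Pulling the constant vector `v` out of the integrals, the
reached state is `∫₀ᵀ K Kᵀ v = W v = x*` and the energy is `∫₀ᵀ vᵀ K Kᵀ v = vᵀ W v = ⟨x*, W⁻¹ x*⟩`.
-/

section IntegralKernel

variable {m n : Type*} [Fintype m] [Fintype n]

theorem transpose_mulVec_dotProduct_transpose_mulVec (M : Matrix n m ℝ) (v w : n → ℝ) :
    Mᵀ *ᵥ v ⬝ᵥ Mᵀ *ᵥ w = v ⬝ᵥ (M * Mᵀ) *ᵥ w := by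
  rw [← mulVec_mulVec, dotProduct_mulVec v, ← mulVec_transpose]

noncomputable def mulVecRightCLM (v : n → ℝ) : Matrix m n ℝ →L[ℝ] m → ℝ :=
  LinearMap.toContinuousLinearMap
    { toFun := fun M => M *ᵥ v
      map_add' := fun M M' => add_mulVec M M' v
      map_smul' := fun c M => smul_mulVec c M v }

theorem intervalIntegral_mulVec {f : ℝ → Matrix m n ℝ} (hf : Continuous f) (a b : ℝ)
    (v : n → ℝ) : ∫ x in a..b, f x *ᵥ v = (∫ x in a..b, f x) *ᵥ v :=
  (mulVecRightCLM v).intervalIntegral_comp_comm (hf.intervalIntegrable a b)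

theorem intervalIntegral_dotProduct_mulVec {f : ℝ → Matrix m n ℝ} (hf : Continuous f)
    (a b : ℝ) (w : m → ℝ) (v : n → ℝ) :
    ∫ x in a..b, w ⬝ᵥ f x *ᵥ v = w ⬝ᵥ (∫ x in a..b, f x) *ᵥ v :=
  ((dotProductBilin ℝ ℝ w).toContinuousLinearMap.comp (mulVecRightCLM v)).intervalIntegral_comp_comm
    (hf.intervalIntegrable a b)

variable {K : ℝ → Matrix n m ℝ}

theorem intervalIntegral_mulVec_transpose_mulVec (hK : Continuous K) (a b : ℝ) (v : n → ℝ) :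
    ∫ x in a..b, K x *ᵥ (K x)ᵀ *ᵥ v = (∫ x in a..b, K x * (K x)ᵀ) *ᵥ v := by
  simp_rw [mulVec_mulVec]
  exact intervalIntegral_mulVec (hK.matrix_mul hK.matrix_transpose) a b v

theorem intervalIntegral_transpose_mulVec_dotProduct_self (hK : Continuous K) (a b : ℝ)
    (v : n → ℝ) :
    ∫ x in a..b, (K x)ᵀ *ᵥ v ⬝ᵥ (K x)ᵀ *ᵥ v = v ⬝ᵥ (∫ x in a..b, K x * (K x)ᵀ) *ᵥ v := by
  simp_rw [transpose_mulVec_dotProduct_transpose_mulVec]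
  exact intervalIntegral_dotProduct_mulVec (hK.matrix_mul hK.matrix_transpose) a b v v

end IntegralKernel

section ExpKernel

variable {m n : Type*} [Fintype n] [DecidableEq n] (A : Matrix n n ℝ) (B : Matrix n m ℝ)

theorem continuous_exp_smul : Continuous fun t : ℝ => NormedSpace.exp (t • A) := by
  -- The `L∞`-operator norm makes matrices a normed ring and induces the entrywise topology.
  let R : NormedRing (Matrix n n ℝ) := Matrix.linftyOpNormedRing
  let _ : NormedAlgebra ℝ (Matrix n n ℝ) := Matrix.linftyOpNormedAlgebra
  let Q : NormedAlgebra ℚ (Matrix n n ℝ) := NormedAlgebra.restrictScalars ℚ ℝ _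
  exact (@NormedSpace.exp_continuous _ R Q (inferInstanceAs (CompleteSpace (n → n → ℝ)))).comp
    (continuous_id.smul continuous_const)

theorem transpose_exp_smul_mul (t : ℝ) :
    (NormedSpace.exp (t • A) * B)ᵀ = Bᵀ * NormedSpace.exp (t • Aᵀ) := by
  rw [transpose_mul, ← exp_transpose, transpose_smul]

theorem intervalIntegral_exp_smul_mul_mul_transpose [Fintype m] (T : ℝ) :
    ∫ s in (0:ℝ)..T, NormedSpace.exp ((T - s) • A) * B * (NormedSpace.exp ((T - s) • A) * B)ᵀ
      = ∫ t in (0:ℝ)..T, NormedSpace.exp (t • A) * B * Bᵀ * NormedSpace.exp (t • Aᵀ) := by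
  simp_rw [transpose_exp_smul_mul, ← Matrix.mul_assoc]
  rw [intervalIntegral.integral_comp_sub_left
    (fun t => NormedSpace.exp (t • A) * B * Bᵀ * NormedSpace.exp (t • Aᵀ)), sub_self, sub_zero]

end ExpKernel

theorem gramian_minimum_energy_control_general
    (n N : ℕ)
    (A : Matrix (Fin n) (Fin n) ℝ) (B : Matrix (Fin n) (Fin N) ℝ)
    (T : ℝ)
    (W : Matrix (Fin n) (Fin n) ℝ)
    (hW : W = ∫ t in (0:ℝ)..T,
      NormedSpace.exp (t • A) * B * Bᵀ * NormedSpace.exp (t • Aᵀ))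
    (hWinv : IsUnit W)
    (xstar : Fin n → ℝ)
    (ustar : ℝ → Fin N → ℝ)
    (hustar : ∀ s, ustar s =
      (Bᵀ * NormedSpace.exp ((T - s) • Aᵀ)).mulVec (W⁻¹.mulVec xstar)) :
    (∫ s in (0:ℝ)..T,
      (NormedSpace.exp ((T - s) • A) * B).mulVec (ustar s)) = xstar ∧
    (∫ s in (0:ℝ)..T, ustar s ⬝ᵥ ustar s) = xstar ⬝ᵥ W⁻¹.mulVec xstar := by
  set K : ℝ → Matrix (Fin n) (Fin N) ℝ := fun s => NormedSpace.exp ((T - s) • A) * B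
  have hK : Continuous K :=
    ((continuous_exp_smul A).comp (continuous_const.sub continuous_id)).matrix_mul continuous_const
  have hu : ∀ s, ustar s = (K s)ᵀ *ᵥ W⁻¹ *ᵥ xstar := fun s => by
    rw [hustar, transpose_exp_smul_mul]
  have hKW : ∫ s in (0:ℝ)..T, K s * (K s)ᵀ = W := by
    rw [hW, intervalIntegral_exp_smul_mul_mul_transpose]
  have hWv : W *ᵥ W⁻¹ *ᵥ xstar = xstar := by
    rw [mulVec_mulVec, mul_nonsing_inv W ((isUnit_iff_isUnit_det W).mp hWinv), one_mulVec]
  simp_rw [hu]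
  constructor
  · rw [intervalIntegral_mulVec_transpose_mulVec hK, hKW, hWv]
  · rw [intervalIntegral_transpose_mulVec_dotProduct_self hK, hKW, hWv, dotProduct_comm]

/-- **The minimum-energy control attains the Gramian bound.**
For the linear system `ẋ = Ax + Bu` with invertible reachability Gramian
`W = ∫₀ᵀ e^{tA} B Bᵀ e^{tAᵀ} dt`, the control `u*(s) = Bᵀ e^{(T−s)Aᵀ} W⁻¹ x*` steers the
origin to `x*` at time `T`, i.e. `∫₀ᵀ e^{(T−s)A} B u*(s) ds = x*`, and its energy equals
the minimum: `∫₀ᵀ ‖u*(s)‖² ds = ⟨x*, W⁻¹ x*⟩`. -/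
theorem gramian_minimum_energy_control
    (n N : ℕ) (hn : 0 < n) (hN : 0 < N)
    (A : Matrix (Fin n) (Fin n) ℝ) (B : Matrix (Fin n) (Fin N) ℝ)
    (T : ℝ) (hT : 0 < T)
    (W : Matrix (Fin n) (Fin n) ℝ)
    (hW : W = ∫ t in (0:ℝ)..T,
      NormedSpace.exp (t • A) * B * Bᵀ * NormedSpace.exp (t • Aᵀ))
    (hWinv : IsUnit W)
    (xstar : Fin n → ℝ)
    (ustar : ℝ → Fin N → ℝ)
    (hustar : ∀ s, ustar s =
      (Bᵀ * NormedSpace.exp ((T - s) • Aᵀ)).mulVec (W⁻¹.mulVec xstar)) :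
    (∫ s in (0:ℝ)..T,
      (NormedSpace.exp ((T - s) • A) * B).mulVec (ustar s)) = xstar ∧
    (∫ s in (0:ℝ)..T, ustar s ⬝ᵥ ustar s) = xstar ⬝ᵥ W⁻¹.mulVec xstar :=
  gramian_minimum_energy_control_general n N A B T W hW hWinv xstar ustar hustar
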